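/- arXiv:2010.05547 — 2 statements merged into one kernel-verified Lean document; each statement's English description precedes it below -/
import Mathlib

section
/- Let Ψ be a semi-invariant conformal ζ^⊥-Riemannian submersion with dim fiber = 2p+q and horizontal dimension q+2r+1, where q+2r ≠ 2. Then any two of the following imply the third: (i) Ψ is harmonic (τ(Ψ) = 0); (ii) the fibers are minimal (mean curvature vector vanishes); (iii) Ψ is horizontally homothetic (the horizontal part of grad ln λ vanishes). -/
theorem eq_zero_of_smul_map_eq_zero {K M W : Type*} [Field K] [AddCommGroup M] [Module K M]
    [AddCommGroup W] [Module K W] {f : M →ₗ[K] W} {H : Submodule K M}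
    (hinj : ∀ x ∈ H, f x = 0 → x = 0) {c : K} (hc : c ≠ 0) {x : M} (hx : x ∈ H)
    (h : c • f x = 0) : x = 0 :=
  hinj x hx ((smul_eq_zero.mp h).resolve_left hc)

theorem two_sub_cast_sub_two_mul_cast_ne_zero {q r : ℕ} (hq : q + 2 * r ≠ 2) :
    (2 : ℝ) - q - 2 * r ≠ 0 := by
  intro h
  apply hq
  exact_mod_cast (by linarith : (q : ℝ) + 2 * r = 2)

/-- With `τ(Ψ) = −(2p+q)Ψ_*(μ₀) + (2−q−2r)Ψ_*(G)` and `q+2r ≠ 2`, any two of the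
following imply the third: (i) `Ψ` is harmonic (`τ = 0`); (ii) the fibers are minimal
(`μ₀ = 0`); (iii) `Ψ` is horizontally homothetic (`G = H grad ln λ = 0`). -/
theorem stmt_17 {E W : Type*} [NormedAddCommGroup E] [InnerProductSpace ℝ E]
    [AddCommGroup W] [Module ℝ W]
    (p q r : ℕ) (hq : q + 2*r ≠ 2) (hp : 0 < 2*p + q)
    (Ψs : E →ₗ[ℝ] W) (H : Submodule ℝ E)
    (hinj : ∀ x ∈ H, Ψs x = 0 → x = 0)
    (μ₀ G : E) (hμH : μ₀ ∈ H) (hGH : G ∈ H)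
    (τ : W)
    (hτ : τ = -(((2*p+q : ℕ) : ℝ)) • Ψs μ₀ + ((2:ℝ) - (q:ℝ) - 2*(r:ℝ)) • Ψs G) :
    ((τ = 0 ∧ μ₀ = 0) → G = 0) ∧
    ((τ = 0 ∧ G = 0) → μ₀ = 0) ∧
    ((μ₀ = 0 ∧ G = 0) → τ = 0) := by
  have hfiber : -(((2*p+q : ℕ) : ℝ)) ≠ 0 := neg_ne_zero.mpr (Nat.cast_ne_zero.mpr hp.ne')
  have hhoriz := two_sub_cast_sub_two_mul_cast_ne_zero hq
  subst hτ
  refine ⟨fun ⟨hτ0, hμ⟩ => ?_, fun ⟨hτ0, hG⟩ => ?_, fun ⟨hμ, hG⟩ => ?_⟩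
  · subst hμ
    exact eq_zero_of_smul_map_eq_zero hinj hhoriz hGH (by simpa using hτ0)
  · subst hG
    exact eq_zero_of_smul_map_eq_zero hinj hfiber hμH (by simpa using hτ0)
  · simp [hμ, hG]
end

section
/- Let Ψ be a semi-invariant conformal ζ^⊥-Riemannian submersion from an almost contact metric manifold, and let W ∈ D₂ and Q ∈ μ. If (∇Ψ_*)(φW, Q) = 0 for all such W, Q, then λ is constant on μ and on φD₂, i.e., Ψ is horizontally homothetic; conversely, if Ψ is horizontally homothetic then (∇Ψ_*)(φW, Q) = 0. -/
/-!
Since `W ⊥ Q`, the Baird–Wood formula reduces `(∇Ψ_*)(W, Q) = 0` to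
`⟪G, W⟫ • Ψ_* Q + ⟪G, Q⟫ • Ψ_* W = 0`, and a conformal map with `λ ≠ 0` keeps the images of
nonzero orthogonal vectors orthogonal and nonzero, so both coefficients vanish. Testing against a
fixed nonzero `Q ∈ μ` and a fixed nonzero `W ∈ φD₂` then makes `G` orthogonal to `φD₂` and to `μ`,
hence to `H = φD₂ ⊔ μ`.
-/

open scoped RealInnerProductSpace

section Conformal

variable {E F : Type*} [NormedAddCommGroup E] [InnerProductSpace ℝ E]
  [NormedAddCommGroup F] [InnerProductSpace ℝ F]
  {T : E →ₗ[ℝ] F} {lam : ℝ} {H : Submodule ℝ E}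

theorem inner_eq_zero_of_bairdWood_eq_zero (hlam : lam ≠ 0)
    (hconf : ∀ X Y, X ∈ H → Y ∈ H → ⟪T X, T Y⟫ = lam ^ 2 * ⟪X, Y⟫)
    {G X Y : E} (hX : X ∈ H) (hY : Y ∈ H) (hXY : ⟪X, Y⟫ = 0) (hY0 : Y ≠ 0)
    (h : ⟪G, X⟫ • T Y + ⟪G, Y⟫ • T X - ⟪X, Y⟫ • T G = 0) :
    ⟪G, X⟫ = 0 := by
  have hpair : ⟪⟪G, X⟫ • T Y + ⟪G, Y⟫ • T X - ⟪X, Y⟫ • T G, T Y⟫ = 0 := by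
    rw [h, inner_zero_left]
  rw [hXY, zero_smul, sub_zero, inner_add_left, real_inner_smul_left, real_inner_smul_left,
    hconf Y Y hY hY, hconf X Y hX hY, hXY, real_inner_self_eq_norm_sq] at hpair
  have hscale : lam ^ 2 * ‖Y‖ ^ 2 ≠ 0 := by positivity
  exact (mul_eq_zero.mp (by linarith : ⟪G, X⟫ * (lam ^ 2 * ‖Y‖ ^ 2) = 0)).resolve_right hscale

end Conformal

theorem stmt_19_general {E F : Type*} [NormedAddCommGroup E] [InnerProductSpace ℝ E]
    [NormedAddCommGroup F] [InnerProductSpace ℝ F]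
    (T : E →ₗ[ℝ] F) (lam : ℝ) (hlam : lam ≠ 0)
    (H φD₂ μ : Submodule ℝ E)
    (hsup : φD₂ ⊔ μ = H)
    (horth : ∀ W ∈ φD₂, ∀ Q ∈ μ, (inner ℝ W Q : ℝ) = 0)
    (hne1 : φD₂ ≠ ⊥) (hne2 : μ ≠ ⊥)
    (G : E)
    (hconf : ∀ X Y, X ∈ H → Y ∈ H → (inner ℝ (T X) (T Y) : ℝ) = lam ^ 2 * inner ℝ X Y)
    (B : E → E → F)
    (hB : ∀ X Y, X ∈ H → Y ∈ H →
      B X Y = (inner ℝ G X : ℝ) • T Y + (inner ℝ G Y : ℝ) • T X - (inner ℝ X Y : ℝ) • T G) :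
    (∀ W ∈ φD₂, ∀ Q ∈ μ, B W Q = 0) ↔ (∀ X ∈ H, (inner ℝ G X : ℝ) = 0) := by
  have hW : ∀ {W}, W ∈ φD₂ → W ∈ H := fun hW => hsup ▸ Submodule.mem_sup_left hW
  have hQ : ∀ {Q}, Q ∈ μ → Q ∈ H := fun hQ => hsup ▸ Submodule.mem_sup_right hQ
  simp only [← Submodule.mem_orthogonal', ← hsup, ← Submodule.inf_orthogonal,
    Submodule.mem_inf]
  constructor
  · intro h
    obtain ⟨W₀, hW₀, hW₀ne⟩ := (Submodule.ne_bot_iff φD₂).mp hne1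
    obtain ⟨Q₀, hQ₀, hQ₀ne⟩ := (Submodule.ne_bot_iff μ).mp hne2
    refine ⟨(Submodule.mem_orthogonal' _ _).mpr fun W hW' => ?_,
      (Submodule.mem_orthogonal' _ _).mpr fun Q hQ' => ?_⟩
    · refine inner_eq_zero_of_bairdWood_eq_zero hlam hconf (hW hW') (hQ hQ₀)
        (horth W hW' Q₀ hQ₀) hQ₀ne ?_
      rw [← hB W Q₀ (hW hW') (hQ hQ₀), h W hW' Q₀ hQ₀]
    · refine inner_eq_zero_of_bairdWood_eq_zero hlam hconf (hQ hQ') (hW hW₀)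
        (real_inner_comm Q W₀ ▸ horth W₀ hW₀ Q hQ') hW₀ne ?_
      rw [add_comm, real_inner_comm W₀ Q, ← hB W₀ Q (hW hW₀) (hQ hQ'), h W₀ hW₀ Q hQ']
  · rintro ⟨hGW, hGQ⟩ W hW' Q hQ'
    rw [hB W Q (hW hW') (hQ hQ'), (Submodule.mem_orthogonal' _ _).mp hGW W hW',
      (Submodule.mem_orthogonal' _ _).mp hGQ Q hQ', horth W hW' Q hQ']
    simp

/-- `(∇Ψ_*)(φW, Q) = 0` for all `W ∈ D₂`, `Q ∈ μ` if and only if `Ψ` is horizontally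
homothetic, i.e. `grad ln λ` is orthogonal to the horizontal distribution
`H = φD₂ ⊕ μ`. Here `B` denotes the second fundamental form on horizontal vectors given
by the Baird–Wood lemma. -/
theorem stmt_19 {E F : Type*} [NormedAddCommGroup E] [InnerProductSpace ℝ E]
    [NormedAddCommGroup F] [InnerProductSpace ℝ F]
    (T : E →ₗ[ℝ] F) (lam : ℝ) (hlam : lam ≠ 0)
    (H φD₂ μ : Submodule ℝ E)
    (hsub1 : φD₂ ≤ H) (hsub2 : μ ≤ H) (hsup : φD₂ ⊔ μ = H)
    (horth : ∀ W ∈ φD₂, ∀ Q ∈ μ, (inner ℝ W Q : ℝ) = 0)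
    (hne1 : φD₂ ≠ ⊥) (hne2 : μ ≠ ⊥)
    (G : E)
    (hconf : ∀ X Y, X ∈ H → Y ∈ H → (inner ℝ (T X) (T Y) : ℝ) = lam ^ 2 * inner ℝ X Y)
    (B : E → E → F)
    (hB : ∀ X Y, X ∈ H → Y ∈ H →
      B X Y = (inner ℝ G X : ℝ) • T Y + (inner ℝ G Y : ℝ) • T X - (inner ℝ X Y : ℝ) • T G) :
    (∀ W ∈ φD₂, ∀ Q ∈ μ, B W Q = 0) ↔ (∀ X ∈ H, (inner ℝ G X : ℝ) = 0) :=
  stmt_19_general T lam hlam H φD₂ μ hsup horth hne1 hne2 G hconf B hB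
end
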